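/- arXiv:2512.20598 — 2 statements merged into one kernel-verified Lean document; each statement's English description precedes it below -/
import Mathlib

section
/- Let Σ be an ordered alphabet of size σ ≥ 2, let k ≥ 2, and let w_lin be the linearization of (a rotation of) a σ-ary de Bruijn sequence of order k. Then the size χ of a smallest suffixient set of the terminated string w_lin $ equals σ^k + 1. -/
/-- The Burrows–Wheeler transform of `w`: last characters of all cyclic
rotations of `w`, listed in lexicographic order of the rotations. -/
def bwtL {α : Type*} [LinearOrder α] (w : List α) : List α :=
  (List.insertionSort (· ≤ ·)
    ((List.range w.length).map (fun i => w.rotate i))).filterMap List.getLast?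

/-- Number of runs (maximal equal-letter substrings) of a string. -/
def runsCount {α : Type*} [DecidableEq α] (l : List α) : ℕ :=
  (l.destutter (· ≠ ·)).length

/-- Terminate a string with the sentinel `⊥ = $`, smaller than every symbol. -/
def term {α : Type*} (w : List α) : List (WithBot α) :=
  w.map (fun a => (a : WithBot α)) ++ [⊥]

/-- `y` is a right-extension of `v`: `y = x ++ [a]` occurs in `v` where `x`
is right-maximal (some `x ++ [b]` with `b ≠ a` also occurs in `v`). -/
def RightExt {α : Type*} (v y : List α) : Prop :=
  ∃ x a b, y = x ++ [a] ∧ a ≠ b ∧ (x ++ [a]) <:+: v ∧ (x ++ [b]) <:+: v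

/-- `y` is a super-maximal extension of `v`: a right-extension that is not a
proper suffix of any other right-extension. -/
def SuperMax {α : Type*} (v y : List α) : Prop :=
  RightExt v y ∧ ∀ z, RightExt v z → y <:+ z → z = y

/-- Number of super-maximal extensions of `v`. -/
noncomputable def sre {α : Type*} (v : List α) : ℕ :=
  Set.ncard {y | SuperMax v y}

/-- χ(w): the size of a smallest suffixient set of `w$`, which equals the
number of super-maximal extensions of `w$`. -/
noncomputable def chi {α : Type*} (w : List α) : ℕ :=
  sre (term w)

/-- A de Bruijn sequence of order `k` over a finite alphabet `α`: a cyclic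
word of length `(card α)^k` in which every word of length `k` occurs exactly
once as a cyclic length-`k` window. -/
def IsDeBruijn {α : Type*} [Fintype α] (k : ℕ) (C : List α) : Prop :=
  C.length = Fintype.card α ^ k ∧
  ∀ x : List α, x.length = k → ∃! i, i < C.length ∧ x = (C.rotate i).take k

/-- The linearization of a rotation `U` of a de Bruijn cycle of order `k`:
append the first `k − 1` characters of `U` at the end. -/
def linz {α : Type*} (k : ℕ) (U : List α) : List α :=
  U ++ U.take (k - 1)

/-!
If every word of length `k` occurs exactly once in `w` (as it does in the linearization of a
de Bruijn cycle of order `k`), a right-maximal string of `w$` occurs at two positions of `w`, so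
it is shorter than `k`, and every right-extension has length at most `k`. Conversely every word
of length at most `k` occurs in `w`, so a right-extension shorter than `k` can be extended to
the left by one letter and is not super-maximal. The super-maximal extensions are therefore the
`σ^k` words of length `k` and the string `s$`, where `s` is the suffix of length `k - 1` of `w`.
-/

theorem List.infix_iff_exists_prefix_drop {α : Type*} {l₁ l₂ : List α} :
    l₁ <:+: l₂ ↔ ∃ i, l₁ <+: l₂.drop i := by
  rw [List.infix_iff_prefix_suffix]
  constructor
  · rintro ⟨t, hpre, hsuf⟩
    exact ⟨_, List.suffix_iff_eq_drop.1 hsuf ▸ hpre⟩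
  · rintro ⟨i, h⟩
    exact ⟨_, h, List.drop_suffix _ _⟩

section Term

variable {α : Type*} {w x : List α}

-- Not `rfl`: the coercion in `term` is elaborated through the list monad.
theorem term_eq (w : List α) : term w = w.map WithBot.some ++ [⊥] := by
  simp [term, List.map_eq_flatMap]

theorem map_infix_term (h : x <:+: w) : x.map WithBot.some <:+: term w :=
  (h.map _).trans (term_eq w ▸ List.infix_append [] _ _)

theorem map_append_bot_infix_term_iff :
    x.map WithBot.some ++ [⊥] <:+: term w ↔ x <:+ w := by
  rw [term_eq, List.infix_concat_iff, List.suffix_concat_iff]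
  simp only [List.append_eq_nil_iff, List.cons_ne_self, and_false, false_or,
    List.append_cancel_right_eq, exists_eq_left',
    List.suffix_map_iff_of_injective WithBot.coe_injective, or_iff_left_iff_imp]
  intro h
  simpa using h.subset (by simp : (⊥ : WithBot α) ∈ _)

theorem exists_eq_map_of_append_infix_term {y : List (WithBot α)} {a : WithBot α}
    (h : y ++ [a] <:+: term w) : ∃ x : List α, y = x.map WithBot.some := by
  rw [term_eq, List.infix_concat_iff, List.suffix_concat_iff] at h
  have hy : y <:+: w.map WithBot.some := by
    rcases h with (h | ⟨t, ht, hsuf⟩) | h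
    · simp at h
    · rw [List.append_inj_left' ht rfl]
      exact hsuf.isInfix
    · exact (List.prefix_append y [a]).isInfix.trans h
  obtain ⟨x, -, rfl⟩ := List.infix_map_iff.1 hy
  exact ⟨x, rfl⟩

theorem map_prefix_drop_term_iff {i : ℕ} :
    x.map WithBot.some <+: (term w).drop i ↔ x <+: w.drop i := by
  rcases le_or_gt i w.length with hi | hi
  · rw [term_eq, List.drop_append_of_le_length (by simpa using hi), List.prefix_concat_iff]
    simp only [← List.map_drop, List.prefix_map_iff_of_injective WithBot.coe_injective,
      or_iff_right_iff_imp]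
    intro h
    simpa using congrArg ((⊥ : WithBot α) ∈ ·) h
  · rw [List.drop_of_length_le (by simp only [term_eq, List.length_append, List.length_map, List.length_singleton]; omega), List.drop_of_length_le hi.le]
    simp

end Term

theorem ncard_setOf_length_eq (α : Type*) [Fintype α] (k : ℕ) :
    {x : List α | x.length = k}.ncard = Fintype.card α ^ k := by
  rw [← Nat.card_coe_set_eq]
  exact (Nat.card_eq_fintype_card (α := List.Vector α k)).trans (card_vector k)

def IsLinearDeBruijn {α : Type*} (k : ℕ) (w : List α) : Prop :=
  ∀ x : List α, x.length = k → ∃! i, x <+: w.drop i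

namespace IsLinearDeBruijn

variable {α : Type*} {k : ℕ} {w x : List α}

theorem pos (hw : IsLinearDeBruijn k w) : 0 < k := by
  by_contra! hk
  obtain ⟨i, -, huniq⟩ := hw [] (List.length_nil.trans (by omega))
  have h₀ := huniq 0 (List.nil_prefix)
  have h₁ := huniq (i + 1) (List.nil_prefix)
  omega

theorem infix_of_length_le [Nonempty α] (hw : IsLinearDeBruijn k w) (hx : x.length ≤ k) :
    x <:+: w := by
  obtain ⟨d⟩ := ‹Nonempty α›
  obtain ⟨i, hi, -⟩ := hw (x ++ List.replicate (k - x.length) d)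
    (by simp only [List.length_append, List.length_replicate]; omega)
  exact (List.prefix_append _ _).isInfix.trans (List.infix_iff_exists_prefix_drop.2 ⟨i, hi⟩)

theorem le_length [Nonempty α] (hw : IsLinearDeBruijn k w) : k ≤ w.length := by
  obtain ⟨d⟩ := ‹Nonempty α›
  simpa using (hw.infix_of_length_le (x := List.replicate k d) (by simp)).length_le

theorem length_lt_of_rightMaximal (hw : IsLinearDeBruijn k w) {y : List (WithBot α)}
    {a b : WithBot α} (hab : a ≠ b) (ha : y ++ [a] <:+: term w) (hb : y ++ [b] <:+: term w) :
    y.length < k := by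
  obtain ⟨x, rfl⟩ := exists_eq_map_of_append_infix_term ha
  obtain ⟨i, hi⟩ := List.infix_iff_exists_prefix_drop.1 ha
  obtain ⟨j, hj⟩ := List.infix_iff_exists_prefix_drop.1 hb
  have hij : i ≠ j := by
    rintro rfl
    simpa [hab] using List.prefix_of_prefix_length_le hi hj (by simp)
  by_contra! hk
  have occurs_at {l : ℕ} {c : WithBot α} (h : x.map WithBot.some ++ [c] <+: (term w).drop l) :
      x.take k <+: w.drop l :=
    map_prefix_drop_term_iff.1 <|
      ((List.take_prefix k x).map _).trans ((List.prefix_append _ _).trans h)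
  exact hij ((hw _ (by simpa using hk)).unique (occurs_at hi) (occurs_at hj))

theorem length_le_of_rightExt (hw : IsLinearDeBruijn k w) {y : List (WithBot α)}
    (hy : RightExt (term w) y) : y.length ≤ k := by
  obtain ⟨x, a, b, rfl, hab, ha, hb⟩ := hy
  simpa using hw.length_lt_of_rightMaximal hab ha hb

theorem rightExt_map [Nontrivial α] (hw : IsLinearDeBruijn k w) (hx : x.length ≤ k)
    (hne : x ≠ []) : RightExt (term w) (x.map WithBot.some) := by
  obtain ⟨x, a, rfl⟩ := (List.eq_nil_or_concat x).resolve_left hne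
  obtain ⟨b, hba⟩ := exists_ne a
  refine ⟨x.map WithBot.some, a, b, by simp, by simpa using hba.symm, ?_, ?_⟩
  · simpa using map_infix_term (hw.infix_of_length_le hx)
  · simpa using map_infix_term (hw.infix_of_length_le (x := x ++ [b]) (by simpa using hx))

theorem rightExt_map_append_bot [Nonempty α] (hw : IsLinearDeBruijn k w) (hx : x <:+ w)
    (hlen : x.length < k) : RightExt (term w) (x.map WithBot.some ++ [⊥]) := by
  obtain ⟨d⟩ := ‹Nonempty α›
  refine ⟨x.map WithBot.some, ⊥, d, rfl, WithBot.bot_ne_coe, ?_, ?_⟩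
  · exact map_append_bot_infix_term_iff.2 hx
  · simpa using map_infix_term (hw.infix_of_length_le (x := x ++ [d])
    (by simp only [List.length_append, List.length_singleton]; omega))

theorem exists_rightExt_cons [Nontrivial α] (hw : IsLinearDeBruijn k w)
    {y : List (WithBot α)} (hy : RightExt (term w) y) (hlen : y.length < k) :
    ∃ e, RightExt (term w) (e :: y) := by
  obtain ⟨_, a, b, rfl, -, ha, -⟩ := hy
  obtain ⟨x, rfl⟩ := exists_eq_map_of_append_infix_term ha
  simp only [List.length_append, List.length_map, List.length_singleton] at hlen
  induction a using WithBot.recBotCoe with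
  | bot =>
    obtain ⟨s, rfl⟩ := map_append_bot_infix_term_iff.1 ha
    have hs : s ≠ [] := by
      rintro rfl
      have := hw.le_length
      simp only [List.nil_append] at this
      omega
    obtain ⟨s, e, rfl⟩ := (List.eq_nil_or_concat s).resolve_left hs
    have hsuf : e :: x <:+ s.concat e ++ x := ⟨s, by simp⟩
    exact ⟨e, by simpa using hw.rightExt_map_append_bot hsuf (by simpa using hlen)⟩
  | coe a =>
    obtain ⟨d⟩ := ‹Nontrivial α›.to_nonempty
    have hlen' : (d :: (x ++ [a])).length ≤ k := by
      simp only [List.length_cons, List.length_append, List.length_nil]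
      omega
    exact ⟨d, by simpa using hw.rightExt_map hlen' (List.cons_ne_nil _ _)⟩

theorem superMax_iff [Nontrivial α] (hw : IsLinearDeBruijn k w) {y : List (WithBot α)} :
    SuperMax (term w) y ↔ RightExt (term w) y ∧ y.length = k := by
  refine ⟨fun ⟨hy, hmax⟩ => ⟨hy, (hw.length_le_of_rightExt hy).antisymm ?_⟩,
    fun ⟨hy, hlen⟩ => ⟨hy, fun z hz hyz => ?_⟩⟩
  · by_contra! hlt
    obtain ⟨e, he⟩ := hw.exists_rightExt_cons hy hlt
    exact List.cons_ne_self e y (hmax _ he (List.suffix_cons e y))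
  · exact (hyz.eq_of_length (hyz.length_le.antisymm (hlen ▸ hw.length_le_of_rightExt hz))).symm

theorem setOf_superMax [Nontrivial α] (hw : IsLinearDeBruijn k w) :
    {y | SuperMax (term w) y} =
      insert ((w.drop (w.length - (k - 1))).map WithBot.some ++ [⊥])
        (List.map WithBot.some '' {x : List α | x.length = k}) := by
  have hk := hw.pos
  have hkw := hw.le_length
  ext y
  rw [Set.mem_ofPred_eq, hw.superMax_iff]
  constructor
  · rintro ⟨⟨_, a, b, rfl, -, ha, -⟩, hlen⟩
    obtain ⟨x, rfl⟩ := exists_eq_map_of_append_infix_term ha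
    simp only [List.length_append, List.length_map, List.length_singleton] at hlen
    induction a using WithBot.recBotCoe with
    | bot =>
      left
      rw [List.suffix_iff_eq_drop.1 (map_append_bot_infix_term_iff.1 ha)]
      congr 4
      omega
    | coe a => exact Or.inr ⟨x ++ [a], by simpa using hlen, by simp⟩
  · rintro (rfl | ⟨x, hx, rfl⟩)
    · exact ⟨hw.rightExt_map_append_bot (List.drop_suffix _ _)
        (by simp only [List.length_drop]; omega),
        by simp only [List.length_append, List.length_map, List.length_drop,
          List.length_singleton]; omega⟩
    · have hne : x ≠ [] := by
        rintro rfl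
        simp only [Set.mem_ofPred_eq, List.length_nil] at hx
        omega
      exact ⟨hw.rightExt_map hx.le hne, by simpa using hx⟩

theorem chi_eq [Fintype α] [Nontrivial α] (hw : IsLinearDeBruijn k w) :
    chi w = Fintype.card α ^ k + 1 := by
  have hbot : (w.drop (w.length - (k - 1))).map WithBot.some ++ [⊥] ∉
      List.map WithBot.some '' {x : List α | x.length = k} := by
    rintro ⟨x, -, hx⟩
    simpa using congrArg ((⊥ : WithBot α) ∈ ·) hx
  rw [chi, sre, hw.setOf_superMax,
    Set.ncard_insert_of_notMem hbot ((List.finite_length_eq α k).image _),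
    Set.ncard_image_of_injective _ (List.map_injective_iff.2 WithBot.coe_injective),
    ncard_setOf_length_eq]

end IsLinearDeBruijn

theorem Nat.existsUnique_lt_add_mod_eq {n i : ℕ} (hi : i < n) (c : ℕ) :
    ∃! j, j < n ∧ (c + j) % n = i := by
  refine existsUnique_of_exists_of_unique
    ⟨(i + (n - c % n)) % n, Nat.mod_lt _ (by omega), ?_⟩ ?_
  · have := Nat.mod_lt c (by omega : 0 < n)
    calc (c + (i + (n - c % n)) % n) % n = (c % n + (i + (n - c % n))) % n := by
          rw [Nat.add_mod_mod, Nat.mod_add_mod]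
      _ = (i + n) % n := by congr 1; omega
      _ = i := by rw [Nat.add_mod_right, Nat.mod_eq_of_lt hi]
  · rintro j₁ j₂ ⟨hj₁, h₁⟩ ⟨hj₂, h₂⟩
    have : j₁ ≡ j₂ [MOD n] := Nat.ModEq.add_left_cancel' c (h₁.trans h₂.symm)
    rwa [Nat.ModEq, Nat.mod_eq_of_lt hj₁, Nat.mod_eq_of_lt hj₂] at this

section Cyclic

variable {α : Type*} {k : ℕ}

theorem IsDeBruijn.rotate [Fintype α] {C : List α} (hC : IsDeBruijn k C) (c : ℕ) :
    IsDeBruijn k (C.rotate c) := by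
  refine ⟨by rw [List.length_rotate, hC.1], fun x hx => ?_⟩
  obtain ⟨i, ⟨hi, hxi⟩, huniq⟩ := hC.2 x hx
  have window_eq_iff (j : ℕ) : (j < C.length ∧ x = ((C.rotate c).rotate j).take k) ↔
      (j < C.length ∧ (c + j) % C.length = i) := by
    rw [List.rotate_rotate, ← List.rotate_mod]
    exact and_congr_right fun _ =>
      ⟨fun h => huniq _ ⟨Nat.mod_lt _ (by omega), h⟩, fun h => h ▸ hxi⟩
  rw [List.length_rotate]
  exact (existsUnique_congr window_eq_iff).2 (Nat.existsUnique_lt_add_mod_eq hi c)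

theorem take_drop_linz {U : List α} {j : ℕ} (hj : j < U.length) (hk : k ≤ U.length) :
    ((linz k U).drop j).take k = (U.rotate j).take k := by
  rw [linz, List.rotate_eq_drop_append_take hj.le, List.drop_append_of_le_length hj.le,
    List.take_append, List.take_append, List.take_take, List.take_take]
  congr 2
  simp only [List.length_drop]
  omega

theorem IsDeBruijn.isLinearDeBruijn_linz [Fintype α] {U : List α} (hU : IsDeBruijn k U)
    (hk : 0 < k) (hkU : k ≤ U.length) : IsLinearDeBruijn k (linz k U) := by
  intro x hx
  have occurs_iff (j : ℕ) :
      x <+: (linz k U).drop j ↔ j < U.length ∧ x = (U.rotate j).take k := by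
    rw [List.prefix_iff_eq_take, hx]
    rcases lt_or_ge j U.length with hj | hj
    · simp [hj, take_drop_linz hj hkU]
    · have : (((linz k U).drop j).take k).length < k := by
        simp only [linz, List.length_take, List.length_drop, List.length_append]; omega
      simp only [not_lt.2 hj, false_and, iff_false]
      rintro rfl
      omega
  exact (existsUnique_congr occurs_iff).2 (hU.2 x hx)

end Cyclic

theorem deBruijn_chi_general {α : Type*} [Fintype α]
    (σ : ℕ) (hσ : 2 ≤ σ) (hcard : Fintype.card α = σ)
    (k : ℕ) (hk : 2 ≤ k)
    (C : List α) (hC : IsDeBruijn k C) (c : ℕ) :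
    chi (linz k (C.rotate c)) = σ ^ k + 1 := by
  have : Nontrivial α := Fintype.one_lt_card_iff_nontrivial.1 (by omega)
  have hkC : k ≤ (C.rotate c).length := by
    rw [List.length_rotate, hC.1, hcard]
    exact (Nat.lt_two_pow_self).le.trans (Nat.pow_le_pow_left hσ k)
  rw [((hC.rotate c).isLinearDeBruijn_linz (by omega) hkC).chi_eq, hcard]

/-- for the linearization `w_lin` of (a rotation of) a σ-ary
de Bruijn sequence of order k ≥ 2 (σ ≥ 2), the size χ of a smallest
suffixient set of the terminated string `w_lin $` equals `σ^k + 1`. -/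
theorem deBruijn_chi {α : Type*} [Fintype α] [LinearOrder α]
    (σ : ℕ) (hσ : 2 ≤ σ) (hcard : Fintype.card α = σ)
    (k : ℕ) (hk : 2 ≤ k)
    (C : List α) (hC : IsDeBruijn k C) (c : ℕ) :
    chi (linz k (C.rotate c)) = σ ^ k + 1 :=
  deBruijn_chi_general σ hσ hcard k hk C hC c
end

section
/- Let Σ be an ordered alphabet of size σ ≥ 2, let k ≥ 2, and let w_lin be the linearization of (a rotation of) a σ-ary de Bruijn sequence of order k. Then the number r of runs in BWT(w_lin $) satisfies r ≥ σ^{k-1}(σ − 1) + 1. -/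
open List

namespace List

section Stutter

variable {β : Type*} [DecidableEq β]

def stutterIdx (l : List β) : Finset ℕ :=
  {j ∈ Finset.range (l.length - 1) | l[j]? = l[j + 1]?}

theorem mem_stutterIdx {l : List β} {j : ℕ} :
    j ∈ stutterIdx l ↔ ∃ h : j + 1 < l.length, l[j] = l[j + 1] := by
  simp only [stutterIdx, Finset.mem_filter, Finset.mem_range]
  constructor
  · rintro ⟨hj, heq⟩
    have h : j + 1 < l.length := by omega
    rw [getElem?_eq_getElem (by omega), getElem?_eq_getElem h, Option.some_inj] at heq
    exact ⟨h, heq⟩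
  · rintro ⟨h, heq⟩
    refine ⟨by omega, ?_⟩
    rw [getElem?_eq_getElem (by omega), getElem?_eq_getElem h, heq]

theorem card_stutterIdx_cons_cons (a b : β) (t : List β) :
    (stutterIdx (a :: b :: t)).card = (stutterIdx (b :: t)).card + if a = b then 1 else 0 := by
  simp only [stutterIdx, Finset.card_filter, length_cons, Nat.add_sub_cancel,
    Finset.sum_range_succ' _ t.length]
  simp

theorem runsCount_add_card_stutterIdx (l : List β) :
    runsCount l + (stutterIdx l).card = l.length := by
  induction l with
  | nil => simp [runsCount, stutterIdx]
  | cons a l ih =>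
    cases l with
    | nil => simp [runsCount, stutterIdx]
    | cons b t =>
      have hruns : runsCount (a :: b :: t) = runsCount (b :: t) + if a = b then 0 else 1 := by
        by_cases hab : a = b <;> simp [runsCount, destutter_cons', destutter', hab]
      rw [card_stutterIdx_cons_cons, hruns, length_cons, ← ih]
      split_ifs <;> omega

theorem stutterIdx_map {δ : Type*} [DecidableEq δ] {f : β → δ} (hf : f.Injective)
    (l : List β) : stutterIdx (l.map f) = stutterIdx l := by
  simp [stutterIdx, (Option.map_injective hf).eq_iff]

end Stutter

section Lex

variable {γ : Type*} [LinearOrder γ]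

theorem take_le_take_of_lt {u v : List γ} (h : u < v) (m : ℕ) : u.take m ≤ v.take m := by
  induction h generalizing m with
  | nil => cases m <;> simp [le_iff_lt_or_eq]
  | cons _ ih => cases m <;> simp [cons_le_cons, ih]
  | rel h =>
    cases m
    · exact le_rfl
    · exact le_of_lt (b := _ :: _) (.rel h)

theorem take_le_take_of_le {u v : List γ} (h : u ≤ v) (m : ℕ) : u.take m ≤ v.take m := by
  rcases h.lt_or_eq with h | rfl
  · exact take_le_take_of_lt h m
  · exact le_rfl

/-- Consecutive words with equal `f`-values are told apart by the `m`-prefix of the second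
one. -/
theorem card_stutterIdx_map_le {δ : Type*} [DecidableEq δ] {L : List (List γ)}
    (hL : L.Pairwise (· ≤ ·)) (hnd : L.Nodup) (f : List γ → δ) (m : ℕ)
    (hdet : ∀ r ∈ L, ∀ r' ∈ L, r.take m = r'.take m → f r = f r' → r = r') :
    (stutterIdx (L.map f)).card ≤ (L.toFinset.image (take m)).card := by
  have hsucc : ∀ j ∈ stutterIdx (L.map f), ∃ h : j + 1 < L.length, f L[j] = f L[j + 1] := by
    intro j hj
    obtain ⟨h, heq⟩ := mem_stutterIdx.mp hj
    exact ⟨by simpa using h, by simpa using heq⟩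
  have hmono : ∀ a b (ha : a < L.length) (hb : b < L.length), a ≤ b → L[a] ≤ L[b] := by
    intro a b ha hb hab
    rcases hab.lt_or_eq with hab | rfl
    · exact pairwise_iff_getElem.mp hL a b ha hb hab
    · exact le_rfl
  refine Finset.card_le_card_of_injOn (fun j => (L.getD (j + 1) []).take m) ?_ ?_
  · intro j hj
    obtain ⟨h, -⟩ := hsucc j hj
    simp only [getD_eq_getElem _ _ h, Finset.coe_image, Set.mem_image, Finset.mem_coe,
      mem_toFinset]
    exact ⟨_, getElem_mem h, rfl⟩
  · intro j hj j' hj' heq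
    by_contra hne
    wlog hlt : j < j' generalizing j j'
    · exact this hj' hj heq.symm (Ne.symm hne) (by omega)
    obtain ⟨h, -⟩ := hsucc j hj
    obtain ⟨h', hf⟩ := hsucc j' hj'
    simp only [getD_eq_getElem _ _ h, getD_eq_getElem _ _ h'] at heq
    -- `L[j + 1] ≤ L[j'] ≤ L[j' + 1]`, and the outer two share their `m`-prefix
    have htake : L[j'].take m = L[j' + 1].take m :=
      le_antisymm (take_le_take_of_le (hmono _ _ _ _ (by omega)) m)
        (heq ▸ take_le_take_of_le (hmono _ _ _ _ (by omega)) m)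
    have := hdet _ (getElem_mem _) _ (getElem_mem _) htake hf
    exact absurd (hnd.getElem_inj_iff.mp this) (by omega)

end Lex

section Rotate

variable {γ : Type*}

theorem take_succ_rotate_length_sub_one (l : List γ) (hl : l ≠ []) {m : ℕ}
    (hm : m < l.length) :
    (l.rotate (l.length - 1)).take (m + 1) = l.getLast hl :: l.take m := by
  obtain ⟨d, x, rfl⟩ : ∃ d x, l = d ++ [x] :=
    ⟨l.dropLast, l.getLast hl, (dropLast_append_getLast hl).symm⟩
  simp only [length_append, length_singleton, Nat.add_sub_cancel] at hm ⊢
  rw [rotate_append_length_eq, getLast_append_singleton,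
    take_append_of_le_length (l₁ := d) (by omega)]
  rfl

theorem rotate_append_singleton (v : List γ) (s : γ) {i : ℕ} (hi : i ≤ v.length) :
    (v ++ [s]).rotate i = v.drop i ++ s :: v.take i := by
  rw [rotate_eq_drop_append_take (by rw [length_append]; omega), drop_append_of_le_length hi,
    take_append_of_le_length hi, append_assoc, singleton_append]

theorem take_drop_linz (U : List γ) {k i : ℕ} (hkU : k ≤ U.length) (hi : i < U.length) :
    ((linz k U).drop i).take k = (U.rotate i).take k := by
  rw [linz, drop_append_of_le_length hi.le, rotate_eq_drop_append_take hi.le, take_append,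
    take_append, take_take, take_take, length_drop]
  congr 2
  omega

end Rotate

end List

-- `term` coerces through the list monad, so this is not `rfl`.
theorem term_eq_map_append {α : Type*} (w : List α) : term w = w.map WithBot.some ++ [⊥] := by
  simp [term, map_eq_flatMap]

theorem bot_notMem_map_some {α : Type*} (l : List α) :
    (⊥ : WithBot α) ∉ l.map WithBot.some := by
  simp

def CyclicWindowsInjective {γ : Type*} (k : ℕ) (w : List γ) : Prop :=
  Set.InjOn (fun i => (w.rotate i).take k) (Set.Iio w.length)

namespace CyclicWindowsInjective

variable {γ : Type*} {k : ℕ} {w : List γ}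

theorem rotate_injOn (hw : CyclicWindowsInjective k w) :
    Set.InjOn w.rotate (Set.Iio w.length) :=
  fun _ hi _ hi' h => hw hi hi' (congrArg (take k) h)

theorem rotate (hw : CyclicWindowsInjective k w) (c : ℕ) :
    CyclicWindowsInjective k (w.rotate c) := by
  intro i hi i' hi' h
  simp only [Set.mem_Iio, length_rotate] at hi hi'
  simp only [rotate_rotate, ← rotate_mod w (c + _)] at h
  have hpos : 0 < w.length := by omega
  have : i % w.length = i' % w.length :=
    Nat.ModEq.add_left_cancel' c (hw (Nat.mod_lt _ hpos) (Nat.mod_lt _ hpos) h)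
  rwa [Nat.mod_eq_of_lt hi, Nat.mod_eq_of_lt hi'] at this

/-- A rotation is determined by its prefix of length `k - 1` together with its last letter:
these form the length-`k` window of the rotation one step to the left. -/
theorem eq_of_take_eq_of_getLast?_eq (hw : CyclicWindowsInjective k w) (hk : 0 < k)
    (hkw : k ≤ w.length) {i i' : ℕ} (hi : i < w.length) (hi' : i' < w.length)
    (hpre : (w.rotate i).take (k - 1) = (w.rotate i').take (k - 1))
    (hlast : (w.rotate i).getLast? = (w.rotate i').getLast?) : i = i' := by
  have hne : ∀ j, w.rotate j ≠ [] := fun j =>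
    rotate_eq_nil_iff.not.mpr (ne_nil_of_length_pos (by omega))
  have hshift : ∀ j, (w.rotate ((j + (w.length - 1)) % w.length)).take k
      = (w.rotate j).getLast (hne j) :: (w.rotate j).take (k - 1) := by
    intro j
    have := take_succ_rotate_length_sub_one (w.rotate j) (hne j) (m := k - 1)
      (by rw [length_rotate]; omega)
    rwa [length_rotate, Nat.sub_add_cancel hk, rotate_rotate, ← rotate_mod] at this
  have hlast' : (w.rotate i).getLast (hne i) = (w.rotate i').getLast (hne i') := by
    rwa [getLast?_eq_some_getLast (hne i), getLast?_eq_some_getLast (hne i'),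
      Option.some_inj] at hlast
  have hmod : (i + (w.length - 1)) % w.length = (i' + (w.length - 1)) % w.length :=
    hw (Nat.mod_lt _ (by omega)) (Nat.mod_lt _ (by omega))
      (by simp only [hshift, hlast', hpre])
  have hrot : (w.rotate i).rotate (w.length - 1) = (w.rotate i').rotate (w.length - 1) := by
    rw [rotate_rotate, rotate_rotate, ← rotate_mod, hmod, rotate_mod]
  exact hw.rotate_injOn hi hi' (rotate_injective _ hrot)

theorem length_le_runsCount_bwtL_add [LinearOrder γ] (hw : CyclicWindowsInjective k w)
    (hk : 0 < k) (hkw : k ≤ w.length) :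
    w.length ≤ runsCount (bwtL w)
      + ((Finset.range w.length).image fun i => (w.rotate i).take (k - 1)).card := by
  set R := (range w.length).map w.rotate
  set L := insertionSort (· ≤ ·) R
  have hperm : L ~ R := perm_insertionSort _ R
  have hmemL : ∀ r ∈ L, ∃ i < w.length, w.rotate i = r := fun r hr => by
    simpa [R] using hperm.mem_iff.mp hr
  have hRnd : R.Nodup := nodup_range.map_on fun i hi i' hi' h =>
    hw.rotate_injOn (by simpa using hi) (by simpa using hi') h
  have hbwt : (bwtL w).map some = L.map getLast? := by
    rw [bwtL, map_filterMap_some_eq_filter_map_isSome, filter_eq_self]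
    intro o ho
    obtain ⟨r, hr, rfl⟩ := mem_map.mp ho
    obtain ⟨i, -, rfl⟩ := hmemL r hr
    exact getLast?_isSome.mpr (rotate_eq_nil_iff.not.mpr (ne_nil_of_length_pos (by omega)))
  have hdet : ∀ r ∈ L, ∀ r' ∈ L, r.take (k - 1) = r'.take (k - 1) →
      r.getLast? = r'.getLast? → r = r' := by
    intro r hr r' hr' hpre hlast
    obtain ⟨i, hi, rfl⟩ := hmemL r hr
    obtain ⟨i', hi', rfl⟩ := hmemL r' hr'
    rw [hw.eq_of_take_eq_of_getLast?_eq hk hkw hi hi' hpre hlast]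
  have himage : L.toFinset.image (take (k - 1))
      = (Finset.range w.length).image fun i => (w.rotate i).take (k - 1) := by
    rw [toFinset_eq_of_perm _ _ hperm]
    ext x
    simp [R]
  calc w.length = (bwtL w).length := by
        simpa [L, R] using (congrArg length hbwt).symm
    _ = runsCount (bwtL w) + (stutterIdx (L.map getLast?)).card := by
        rw [← hbwt, stutterIdx_map (Option.some_injective γ), runsCount_add_card_stutterIdx]
    _ ≤ _ := by
        rw [← himage]
        exact Nat.add_le_add_left (card_stutterIdx_map_le (pairwise_insertionSort _ R)
          (hperm.nodup_iff.mpr hRnd) _ _ hdet) _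

theorem term_linz {α : Type*} [DecidableEq α] {U : List α} (hU : CyclicWindowsInjective k U)
    (hk : 0 < k) (hkU : k ≤ U.length) : CyclicWindowsInjective k (term (linz k U)) := by
  set V := (linz k U).map WithBot.some
  have hVlen : V.length = U.length + (k - 1) := by
    simp only [V, linz, length_map, length_append, length_take]
    omega
  have hwin : ∀ i ≤ V.length, ((term (linz k U)).rotate i).take k
      = (V.drop i ++ ⊥ :: V.take i).take k := fun i hi => by
    rw [term_eq_map_append, rotate_append_singleton _ _ hi]
  have hfree : ∀ i < U.length, ((term (linz k U)).rotate i).take k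
      = ((U.rotate i).take k).map WithBot.some := fun i hi => by
    rw [hwin i (by omega), take_append_of_le_length (by rw [length_drop]; omega),
      ← take_drop_linz U hkU hi, map_take, map_drop]
  have hbot : ∀ i, U.length ≤ i → i ≤ V.length →
      (((term (linz k U)).rotate i).take k).idxOf ⊥ = V.length - i := fun i hi hiV => by
    rw [hwin i hiV, take_append, take_of_length_le (by rw [length_drop]; omega), length_drop,
      idxOf_append_of_notMem (by simp only [V, ← map_drop]; exact bot_notMem_map_some _)]
    obtain ⟨m, hm⟩ : ∃ m, k - (V.length - i) = m + 1 := ⟨k - (V.length - i) - 1, by omega⟩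
    simp [hm]
  have hfreeIdx : ∀ i < U.length, (((term (linz k U)).rotate i).take k).idxOf ⊥ = k :=
    fun i hi => by
      rw [hfree i hi, idxOf_eq_length_iff.mpr (bot_notMem_map_some _), length_map, length_take,
        length_rotate]
      omega
  intro i hi i' hi' h
  have hlen : (term (linz k U)).length = V.length + 1 := by
    rw [term_eq_map_append, length_append, length_singleton]
  simp only [Set.mem_Iio, hlen, hVlen] at hi hi'
  dsimp only at h
  have hidx := congrArg (idxOf ⊥) h
  rcases lt_or_ge i U.length with hiU | hiU <;> rcases lt_or_ge i' U.length with hiU' | hiU'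
  · rw [hfree i hiU, hfree i' hiU'] at h
    exact hU hiU hiU' (map_injective_iff.mpr (Option.some_injective _) h)
  · rw [hfreeIdx i hiU, hbot i' hiU' (by omega)] at hidx
    omega
  · rw [hbot i hiU (by omega), hfreeIdx i' hiU'] at hidx
    omega
  · rw [hbot i hiU (by omega), hbot i' hiU' (by omega)] at hidx
    omega

end CyclicWindowsInjective

theorem IsDeBruijn.cyclicWindowsInjective {α : Type*} [Fintype α] {k : ℕ} {C : List α}
    (hC : IsDeBruijn k C) (hkC : k ≤ C.length) : CyclicWindowsInjective k C := by
  intro i hi i' hi' h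
  obtain ⟨j, -, huniq⟩ :=
    hC.2 ((C.rotate i).take k) (by rw [length_take, length_rotate]; omega)
  exact (huniq i ⟨hi, rfl⟩).trans (huniq i' ⟨hi', h⟩).symm

/-- Windows not reaching the sentinel are words over `α`; the others are fixed by where the
sentinel sits, which leaves at most `m` choices. -/
theorem card_image_take_rotate_term_le {α : Type*} [Fintype α] [DecidableEq α] (v : List α)
    (m : ℕ) : ((Finset.range (term v).length).image fun i => ((term v).rotate i).take m).card
      ≤ Fintype.card α ^ m + m := by
  have hlen : (term v).length = v.length + 1 := by
    rw [term_eq_map_append, length_append, length_map, length_singleton]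
  rw [hlen, ← Finset.filter_union_filter_not_eq (p := fun i => i + m ≤ v.length)
    (Finset.range _), Finset.image_union]
  refine (Finset.card_union_le _ _).trans (Nat.add_le_add ?_ ?_)
  · have hsub : ({i ∈ Finset.range (v.length + 1) | i + m ≤ v.length}.image
        fun i => ((term v).rotate i).take m)
        ⊆ (Finset.univ : Finset (List.Vector α m)).image fun x => x.toList.map WithBot.some := by
      intro x hx
      obtain ⟨i, hi, rfl⟩ := Finset.mem_image.mp hx
      simp only [Finset.mem_filter, Finset.mem_range] at hi
      refine Finset.mem_image.mpr
        ⟨⟨(v.drop i).take m, by rw [length_take, length_drop]; omega⟩, Finset.mem_univ _, ?_⟩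
      rw [term_eq_map_append, rotate_append_singleton _ _ (by rw [length_map]; omega),
        take_append_of_le_length (by rw [length_drop, length_map]; omega),
        List.Vector.toList_mk, map_take, map_drop]
    calc _ ≤ _ := Finset.card_le_card hsub
      _ ≤ _ := Finset.card_image_le
      _ = _ := by rw [Finset.card_univ, card_vector]
  · have hsub : {i ∈ Finset.range (v.length + 1) | ¬i + m ≤ v.length}
        ⊆ Finset.Ico (v.length + 1 - m) (v.length + 1) := by
      intro i hi
      simp only [Finset.mem_filter, Finset.mem_range, Finset.mem_Ico] at hi ⊢
      omega
    calc _ ≤ _ := Finset.card_image_le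
      _ ≤ _ := Finset.card_le_card hsub
      _ ≤ m := by rw [Nat.card_Ico]; omega

/-- for the linearization `w_lin` of (a rotation of) a σ-ary
de Bruijn sequence of order k ≥ 2 (σ ≥ 2), the number r of runs in
`BWT(w_lin $)` satisfies `r ≥ σ^{k-1}(σ − 1) + 1`. -/
theorem deBruijn_runs_lower_bound {α : Type*} [Fintype α] [LinearOrder α]
    (σ : ℕ) (hσ : 2 ≤ σ) (hcard : Fintype.card α = σ)
    (k : ℕ) (hk : 2 ≤ k)
    (C : List α) (hC : IsDeBruijn k C) (c : ℕ) :
    σ ^ (k - 1) * (σ - 1) + 1 ≤ runsCount (bwtL (term (linz k (C.rotate c)))) := by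
  set U := C.rotate c
  have hUlen : U.length = σ ^ k := by rw [length_rotate, hC.1, hcard]
  have hkU : k ≤ U.length := hUlen ▸ (Nat.lt_pow_self hσ).le
  have hw : CyclicWindowsInjective k (term (linz k U)) :=
    ((hC.cyclicWindowsInjective (by rwa [length_rotate] at hkU)).rotate c).term_linz
      (by omega) hkU
  have hwlen : (term (linz k U)).length = σ ^ k + k := by
    simp only [term_eq_map_append, linz, length_append, length_map, length_take, hUlen,
      length_singleton]
    omega
  have hruns := hw.length_le_runsCount_bwtL_add (by omega) (by omega)
  have hwindows := card_image_take_rotate_term_le (linz k U) (k - 1)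
  have hpow : σ ^ k = σ ^ (k - 1) * σ := by rw [← pow_succ, Nat.sub_add_cancel (by omega)]
  have hle : σ ^ (k - 1) ≤ σ ^ (k - 1) * σ := Nat.le_mul_of_pos_right _ (by omega)
  rw [hcard] at hwindows
  rw [Nat.mul_sub_one]
  omega
end
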